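/- arXiv:2603.26234 — 2 statements merged into one kernel-verified Lean document; each statement's English description precedes it below -/
import Mathlib

section
/- Let Ω ⊂ ℝⁿ be a bounded open set, u ∈ C¹(closure(Ω);ℝᵐ), and for t > 0 set U_t := {x ∈ Ω : |∇u(x)|₂ > t}. Then for every t > 0 and σ > 0 there exist r > 0 and a finite family of pairwise disjoint open cubes Q(x_i;r), 1 ≤ i ≤ l, contained in U_t, such that: (a) |U_t \ ∪_{i=1}^{l} Q(x_i;r)| < σ, and (b) |∇u(x) − ∇u(y)|₂ < σ for all x, y ∈ Q(x_i;r) and all 1 ≤ i ≤ l. Moreover, if the topological boundary ∂U_t has Lebesgue measure zero, there exists an open set W ⊂ Ω such that Ω ∩ (closure(U_t) \ ∪_{i=1}^{l} Q(x_i;r)) ⊆ W and |W| < σ. -/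
open MeasureTheory Filter Topology Set ENNReal Matrix

noncomputable section

/-- Euclidean space `ℝⁿ`. -/
abbrev EV (n : ℕ) : Type := EuclideanSpace ℝ (Fin n)

/-- The space of real `m × n` matrices. -/
abbrev Mat (m n : ℕ) : Type := Matrix (Fin m) (Fin n) ℝ

/-- The linear map `l^A : x ↦ A x` associated to a matrix `A`. -/
def matMap {m n : ℕ} (A : Mat m n) : EV n → EV m := fun x => Matrix.toEuclideanLin A x

/-- The operator (euclidean) norm `|A|₂` of a matrix. -/
def mnorm {m n : ℕ} (A : Mat m n) : ℝ :=
  ‖LinearMap.toContinuousLinearMap (Matrix.toEuclideanLin A)‖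

/-- The affine map `x ↦ ε • (R x) + h`. -/
def affMap {n : ℕ} (ε : ℝ) (R : Mat n n) (h : EV n) : EV n → EV n :=
  fun x => ε • matMap R x + h

/-- `G` is a subgroup of `SO(n)` (as a set of matrices). -/
structure IsSOSubgroup {n : ℕ} (G : Set (Mat n n)) : Prop where
  one_mem : (1 : Mat n n) ∈ G
  mul_mem : ∀ R ∈ G, ∀ S ∈ G, R * S ∈ G
  transpose_mem : ∀ R ∈ G, Rᵀ ∈ G
  orth : ∀ R ∈ G, Rᵀ * R = 1
  det_one : ∀ R ∈ G, R.det = 1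

/-- The class `𝒢^D_ε(Ω)` of the subsets of `Ω` of the form `ε•R(D) + h`, `R ∈ G`, `h ∈ ℝⁿ`. -/
def cellsIn {n : ℕ} (G : Set (Mat n n)) (D : Set (EV n)) (ε : ℝ) (Ω : Set (EV n)) :
    Set (Set (EV n)) :=
  {D' | (∃ R ∈ G, ∃ h : EV n, D' = affMap ε R h '' D) ∧ D' ⊆ Ω}

/-- The class `𝒢^D(Ω) = ⋃_{ε>0} 𝒢^D_ε(Ω)`. -/
def cellsAll {n : ℕ} (G : Set (Mat n n)) (D : Set (EV n)) (Ω : Set (EV n)) :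
    Set (Set (EV n)) :=
  ⋃ ε ∈ Ioi (0 : ℝ), cellsIn G D ε Ω

/-- The BMO-type seminorm `G^{α}_ε(u, Ω)`. -/
def bmoSeminorm {n m : ℕ} (α : (EV n → EV m) → Set (EV n) → ℝ≥0∞)
    (G : Set (Mat n n)) (D : Set (EV n)) (p ε : ℝ) (u : EV n → EV m) (Ω : Set (EV n)) :
    ℝ≥0∞ :=
  ENNReal.ofReal (ε ^ ((n : ℝ) - p)) *
    ⨆ (F : Set (Set (EV n))) (_ : F ⊆ cellsIn G D ε Ω) (_ : F.PairwiseDisjoint id),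
      ∑' D' : F, α u D'.1

/-- Test functions (compactly) supported in `Ω`. -/
def IsTestOn {n : ℕ} (Ω : Set (EV n)) (φ : EV n → ℝ) : Prop :=
  ContDiff ℝ (⊤ : ℕ∞) φ ∧ HasCompactSupport φ ∧ tsupport φ ⊆ Ω

/-- The matrix `u ⊗ ∇φ`. -/
def tensorGrad {n m : ℕ} (u : EV n → EV m) (φ : EV n → ℝ) (x : EV n) : Mat m n :=
  Matrix.of fun i j => u x i * fderiv ℝ φ x (EuclideanSpace.single j 1)

/-- The matrix of distributions `D_𝔏 u` is represented on `Ω` by the function `g`. -/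
def IsWeakDLOn {n m : ℕ} (L : Mat m n →ₗ[ℝ] Mat m n) (u : EV n → EV m)
    (g : EV n → Mat m n) (Ω : Set (EV n)) : Prop :=
  ∀ φ : EV n → ℝ, IsTestOn Ω φ → ∀ (i : Fin m) (j : Fin n),
    ∫ x in Ω, g x i j * φ x = - ∫ x in Ω, (L (tensorGrad u φ x)) i j

/-- `g` is the distributional gradient of `u` on `Ω`. -/
def IsWeakGradOn {n m : ℕ} (u : EV n → EV m) (g : EV n → Mat m n) (Ω : Set (EV n)) : Prop :=
  IsWeakDLOn LinearMap.id u g Ω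

/-- The matrix-valued map `g` belongs to `L^p(Ω; ℝ^{m×n})`. -/
def MemLpMatOn {n m : ℕ} (g : EV n → Mat m n) (p : ℝ) (Ω : Set (EV n)) : Prop :=
  (∀ i j, AEMeasurable (fun x => g x i j) (volume.restrict Ω)) ∧
  ∫⁻ x in Ω, ENNReal.ofReal (mnorm (g x) ^ p) < ⊤

/-- The matrix-valued map `g` belongs to `L^p_loc(Ω; ℝ^{m×n})`. -/
def MemLpMatLoc {n m : ℕ} (g : EV n → Mat m n) (p : ℝ) (Ω : Set (EV n)) : Prop :=
  ∀ K : Set (EV n), K ⊆ Ω → IsCompact K → MemLpMatOn g p K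

/-- `u ∈ L^p_loc(ℝⁿ; ℝᵐ)`. -/
def MemLpLocAll {n m : ℕ} (u : EV n → EV m) (p : ℝ) : Prop :=
  ∀ K : Set (EV n), IsCompact K → MemLp u (ENNReal.ofReal p) (volume.restrict K)

/-- `u ∈ L^p_loc(Ω; ℝᵐ)`. -/
def MemLpLocOn {n m : ℕ} (u : EV n → EV m) (p : ℝ) (Ω : Set (EV n)) : Prop :=
  ∀ K : Set (EV n), K ⊆ Ω → IsCompact K → MemLp u (ENNReal.ofReal p) (volume.restrict K)

/-- `α` is a `p`-core functional subordinated to the reference set `D`,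
the group `Γ^G` and `m`. -/
structure IsPCore {n m : ℕ} (p : ℝ) (G : Set (Mat n n)) (D : Set (EV n))
    (α : (EV n → EV m) → Set (EV n) → ℝ≥0∞) : Prop where
  lt_top : ∀ u D', MemLpLocAll u p → D' ∈ cellsAll G D univ → α u D' < ⊤
  ext_indep : ∀ u v D', D' ∈ cellsAll G D univ →
    (∀ᵐ x ∂volume.restrict D', u x = v x) → α u D' = α v D'
  convexity : ∀ u v D', D' ∈ cellsAll G D univ → ∀ t : ℝ, 0 ≤ t → t ≤ 1 →
    α (fun x => t • u x + (1 - t) • v x) D' ≤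
      ENNReal.ofReal t * α u D' + ENNReal.ofReal (1 - t) * α v D'
  homog : ∀ u D', D' ∈ cellsAll G D univ → ∀ t : ℝ,
    α (fun x => t • u x) D' = ENNReal.ofReal (|t| ^ p) * α u D'
  transl : ∀ u D', D' ∈ cellsAll G D univ → ∀ h : EV m,
    α (fun x => u x + h) D' = α u D'
  chvar : ∀ u D', D' ∈ cellsAll G D univ → ∀ ε : ℝ, 0 < ε → ∀ R ∈ G, ∀ h : EV n,
    α (fun x => u (affMap ε R h x)) D' = α u (affMap ε R h '' D')
  gradBound : ∃ c₁ : ℝ, 0 < c₁ ∧ ∀ (u : EV n → EV m) (g : EV n → Mat m n),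
    MemLp u (ENNReal.ofReal p) (volume.restrict D) → IsWeakGradOn u g D →
    MemLpMatOn g p D →
    α u D ≤ ENNReal.ofReal c₁ * ∫⁻ x in D, ENNReal.ofReal (mnorm (g x) ^ p)

/-- The unit cube `Q = (-1/2, 1/2)ⁿ`. -/
def Qcube (n : ℕ) : Set (EV n) := {x | ∀ i, |x i| < 1 / 2}

/-- `ψ = ψ_{α_p}`, i.e. `ψ A = lim_{ε→0⁺} G^α_ε(l^A, Q)`. -/
def IsPsiFor {n m : ℕ} (α : (EV n → EV m) → Set (EV n) → ℝ≥0∞)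
    (G : Set (Mat n n)) (D : Set (EV n)) (p : ℝ) (ψ : Mat m n → ℝ) : Prop :=
  ∀ A : Mat m n, Tendsto (fun ε => bmoSeminorm α G D p ε (matMap A) (Qcube n))
    (𝓝[>] (0 : ℝ)) (𝓝 (ENNReal.ofReal (ψ A)))

/-- `π` is the projection onto a linear complement `𝒫` of `N_ψ`, along `N_ψ`. -/
def IsPsiProjection {n m : ℕ} (ψ : Mat m n → ℝ) (π : Mat m n →ₗ[ℝ] Mat m n) : Prop :=
  π.comp π = π ∧ (∀ A, ψ (A - π A) = 0) ∧ (∀ A, ψ (π A) = 0 → π A = 0)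

/-- The strong bound `(GB_𝒫)` defining strong `p`-core functionals. -/
def StrongBound {n m : ℕ} (p : ℝ) (D : Set (EV n))
    (α : (EV n → EV m) → Set (EV n) → ℝ≥0∞) (π : Mat m n →ₗ[ℝ] Mat m n) : Prop :=
  ∃ c₃ : ℝ, 0 < c₃ ∧ ∀ (u : EV n → EV m) (g : EV n → Mat m n),
    MemLp u (ENNReal.ofReal p) (volume.restrict D) → IsWeakDLOn π u g D →
    MemLpMatOn g p D →
    α u D ≤ ENNReal.ofReal c₃ * ∫⁻ x in D, ENNReal.ofReal (mnorm (g x) ^ p)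

/-- `α(·, D')` is lower semicontinuous on `L^p(ℝⁿ; ℝᵐ)`. -/
def LscOnLp {n m : ℕ} (p : ℝ) (α : (EV n → EV m) → Set (EV n) → ℝ≥0∞)
    (D' : Set (EV n)) : Prop :=
  ∀ (u : EV n → EV m) (U : ℕ → EV n → EV m),
    MemLp u (ENNReal.ofReal p) volume → (∀ k, MemLp (U k) (ENNReal.ofReal p) volume) →
    Tendsto (fun k => eLpNorm (fun x => U k x - u x) (ENNReal.ofReal p) volume) atTop (𝓝 0) →
    α u D' ≤ liminf (fun k => α (U k) D') atTop

/-- A standard radial mollifier. -/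
structure IsMollifier {n : ℕ} (ρ : EV n → ℝ) : Prop where
  smooth : ContDiff ℝ (⊤ : ℕ∞) ρ
  compact_support : HasCompactSupport ρ
  support_subset : tsupport ρ ⊆ Metric.ball 0 1
  nonneg : ∀ x, 0 ≤ ρ x
  integral_one : ∫ x, ρ x = 1
  radial : ∀ x y : EV n, ‖x‖ = ‖y‖ → ρ x = ρ y

/-- The mollification `ρ_σ * u`. -/
def mollify {n m : ℕ} (ρ : EV n → ℝ) (σ : ℝ) (u : EV n → EV m) : EV n → EV m :=
  fun x => ∫ y, (σ ^ (-(n : ℝ)) * ρ (σ⁻¹ • y)) • u (x - y)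

/-- The Jacobian matrix of `u` at `x`. -/
def gradMat {n m : ℕ} (u : EV n → EV m) (x : EV n) : Mat m n :=
  Matrix.of fun i j => fderiv ℝ u x (EuclideanSpace.single j 1) i

/-- The open axis-parallel cube `Q(c; r) = rQ + c` of side length `r` centered at `c`. -/
def openCube {n : ℕ} (c : EV n) (r : ℝ) : Set (EV n) := {y | ∀ i, |y i - c i| < r / 2}

lemma abs_apply_le_norm {n : ℕ} (x : EV n) (i : Fin n) : |x i| ≤ ‖x‖ := by
  rw [EuclideanSpace.norm_eq]
  have h1 : |x i| = Real.sqrt (‖x i‖ ^ 2) := by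
    rw [Real.norm_eq_abs, sq_abs, Real.sqrt_sq_eq_abs]
  rw [h1]
  exact Real.sqrt_le_sqrt (Finset.single_le_sum (f := fun j => ‖x j‖^2)
    (fun j _ => by positivity) (Finset.mem_univ i))

lemma norm_le_sqrt_mul {n : ℕ} (z : EV n) (a : ℝ) (ha : 0 ≤ a) (h : ∀ i, |z i| ≤ a) :
    ‖z‖ ≤ Real.sqrt n * a := by
  rw [EuclideanSpace.norm_eq]
  have hsum : ∑ i : Fin n, ‖z i‖ ^ 2 ≤ (n : ℝ) * a ^ 2 := by
    calc ∑ i : Fin n, ‖z i‖ ^ 2 ≤ ∑ _i : Fin n, a ^ 2 :=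
          Finset.sum_le_sum fun i _ => by
            have := h i; rw [Real.norm_eq_abs]; nlinarith [abs_nonneg (z i)]
      _ = (n : ℝ) * a ^ 2 := by simp [Finset.sum_const, mul_comm]
  calc Real.sqrt (∑ i : Fin n, ‖z i‖ ^ 2) ≤ Real.sqrt ((n : ℝ) * a ^ 2) := Real.sqrt_le_sqrt hsum
    _ = Real.sqrt n * a := by rw [Real.sqrt_mul (Nat.cast_nonneg n), Real.sqrt_sq ha]

lemma hyperplane_null {n : ℕ} (i : Fin n) (c : ℝ) : volume {x : EV n | x i = c} = 0 := by
  have hker : volume {x : EV n | x i = 0} = 0 := by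
    set S : Submodule ℝ (EV n) := LinearMap.ker
      ((EuclideanSpace.proj i : EV n →L[ℝ] ℝ) : EV n →ₗ[ℝ] ℝ) with hS
    have h1 : {x : EV n | x i = 0} = (S : Set (EV n)) := by
      ext x; simp [hS, LinearMap.mem_ker]
    rw [h1]
    apply Measure.addHaar_submodule
    intro h
    have h2 : (EuclideanSpace.single i (1:ℝ)) ∈ S := h ▸ Submodule.mem_top
    rw [hS, LinearMap.mem_ker] at h2
    have h3 : ((EuclideanSpace.proj i : EV n →L[ℝ] ℝ) : EV n →ₗ[ℝ] ℝ)
        (EuclideanSpace.single i (1:ℝ)) = (1:ℝ) := by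
      show (EuclideanSpace.single i (1:ℝ)) i = 1
      simp [EuclideanSpace.single_apply]
    rw [h3] at h2
    exact one_ne_zero h2
  have heq : {x : EV n | x i = c}
      = (· + (-EuclideanSpace.single i c)) ⁻¹' {x : EV n | x i = 0} := by
    ext x
    have h4 : (x + -EuclideanSpace.single i c) i = x i - c := by
      have h5 : (EuclideanSpace.single i c : EV n) i = c := by simp [EuclideanSpace.single_apply]
      show x i + -(EuclideanSpace.single i c : EV n) i = x i - c
      rw [h5]; ring
    simp only [mem_preimage, mem_setOf_eq, h4, sub_eq_zero]
  rw [heq, measure_preimage_add_right, hker]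

set_option maxHeartbeats 1000000 in
open Metric in
/-- **Lemma (covering of superlevel sets of the gradient by cubes).**
Let `Ω ⊂ ℝⁿ` be a bounded open set, `u ∈ C¹(closure Ω; ℝᵐ)` and, for `t > 0`,
`U_t = {x ∈ Ω : |∇u(x)|₂ > t}`.  For every `t, σ > 0` there exist `r > 0` and a finite family
of pairwise disjoint open cubes `Q(x_i; r) ⊆ U_t`, `1 ≤ i ≤ l`, such that
(a) `|U_t \ ⋃ᵢ Q(x_i;r)| < σ` and (b) `|∇u(x) − ∇u(y)|₂ < σ` for all `x,y ∈ Q(x_i;r)`.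
Moreover, if `|∂U_t| = 0`, then there is an open `W ⊆ Ω` with
`Ω ∩ (closure U_t \ ⋃ᵢ Q(x_i;r)) ⊆ W` and `|W| < σ`. -/
theorem statement4 {n m : ℕ} (Ω : Set (EV n)) (hΩo : IsOpen Ω)
    (hΩb : Bornology.IsBounded Ω)
    (u : EV n → EV m) (hu : ContDiffOn ℝ 1 u (closure Ω))
    {t σ : ℝ} (ht : 0 < t) (hσ : 0 < σ) :
    ∃ (r : ℝ) (l : ℕ) (c : Fin l → EV n), 0 < r ∧
      (∀ i, openCube (c i) r ⊆
        {x ∈ Ω | t < ‖fderivWithin ℝ u (closure Ω) x‖}) ∧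
      (Pairwise fun i j => Disjoint (openCube (c i) r) (openCube (c j) r)) ∧
      volume ({x ∈ Ω | t < ‖fderivWithin ℝ u (closure Ω) x‖} \ ⋃ i, openCube (c i) r)
        < ENNReal.ofReal σ ∧
      (∀ i, ∀ x ∈ openCube (c i) r, ∀ y ∈ openCube (c i) r,
        ‖fderivWithin ℝ u (closure Ω) x - fderivWithin ℝ u (closure Ω) y‖ < σ) ∧
      (volume (frontier {x ∈ Ω | t < ‖fderivWithin ℝ u (closure Ω) x‖}) = 0 →
        ∃ W : Set (EV n), IsOpen W ∧ W ⊆ Ω ∧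
          Ω ∩ (closure {x ∈ Ω | t < ‖fderivWithin ℝ u (closure Ω) x‖} \
            ⋃ i, openCube (c i) r) ⊆ W ∧
          volume W < ENNReal.ofReal σ) := by
  classical
  set g := fderivWithin ℝ u (closure Ω) with hg
  set U : Set (EV n) := {x ∈ Ω | t < ‖g x‖} with hUdef
  have hfw : ∀ x ∈ Ω, g x = fderiv ℝ u x := fun x hx =>
    fderivWithin_of_mem_nhds (Filter.mem_of_superset (hΩo.mem_nhds hx) subset_closure)
  have hcont : ContinuousOn (fderiv ℝ u) Ω :=
    (hu.mono subset_closure).continuousOn_fderiv_of_isOpen hΩo le_rfl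
  have hUeq : U = Ω ∩ (fun x => ‖fderiv ℝ u x‖) ⁻¹' Ioi t := by
    ext x
    constructor
    · rintro ⟨hx, hx2⟩
      exact ⟨hx, by rw [mem_preimage, mem_Ioi, ← hfw x hx]; exact hx2⟩
    · rintro ⟨hx, hx2⟩
      exact ⟨hx, by rw [hfw x hx]; exact hx2⟩
  have hUopen : IsOpen U := by
    rw [hUeq]
    exact hcont.norm.isOpen_inter_preimage hΩo isOpen_Ioi
  have hUsub : U ⊆ Ω := fun x hx => hx.1
  have hUvol : volume U ≠ ⊤ := ((hΩb.subset hUsub).measure_lt_top).ne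
  obtain ⟨K, hKU, hKc, hKlt⟩ := hUopen.measurableSet.exists_isCompact_diff_lt hUvol
    (ENNReal.ofReal_pos.mpr hσ).ne'
  obtain ⟨δ, hδ, hδU⟩ := hKc.exists_cthickening_subset_open hUopen hKU
  set C := cthickening δ K with hC
  have hCc : IsCompact C := hKc.cthickening
  have hCU : C ⊆ U := hδU
  have hCΩ : C ⊆ Ω := hCU.trans hUsub
  have huc := hCc.uniformContinuousOn_of_continuous (hcont.mono hCΩ)
  obtain ⟨η, hη, hηs⟩ := (Metric.uniformContinuousOn_iff.mp huc) σ hσ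
  set r : ℝ := min δ η / (n + 2) with hrdef
  have hr : 0 < r := div_pos (lt_min hδ hη) (by positivity)
  have hrn : Real.sqrt n * r < min δ η := by
    have h1 : Real.sqrt n < (n : ℝ) + 2 := by
      nlinarith [Real.sq_sqrt (Nat.cast_nonneg n : (0:ℝ) ≤ n), Real.sqrt_nonneg (n : ℝ)]
    calc Real.sqrt n * r < ((n : ℝ) + 2) * r := mul_lt_mul_of_pos_right h1 hr
      _ = min δ η := by rw [hrdef]; field_simp
  have cube_dist : ∀ (c : EV n), ∀ x ∈ openCube c r, ∀ y ∈ openCube c r,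
      ‖x - y‖ ≤ Real.sqrt n * r := by
    intro c x hx y hy
    apply norm_le_sqrt_mul _ _ hr.le
    intro i
    have h1 : |x i - c i| < r / 2 := hx i
    have h2 : |y i - c i| < r / 2 := hy i
    have h3 : (x - y) i = x i - y i := rfl
    rw [h3]
    calc |x i - y i| ≤ |x i - c i| + |c i - y i| := abs_sub_le _ _ _
      _ ≤ r / 2 + r / 2 := by rw [abs_sub_comm (c i)]; linarith
      _ = r := by ring
  set ctr : (Fin n → ℤ) → EV n := fun z =>
    (WithLp.equiv 2 (Fin n → ℝ)).symm (fun i => r * z i + r / 2) with hctrdef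
  have hctr : ∀ z i, ctr z i = r * z i + r / 2 := fun z i => rfl
  have memCube : ∀ (z : Fin n → ℤ) (x : EV n),
      x ∈ openCube (ctr z) r ↔ ∀ i, r * z i < x i ∧ x i < r * z i + r := by
    intro z x
    constructor
    · intro hx i
      have := hx i
      rw [hctr, abs_lt] at this
      constructor <;> linarith [this.1, this.2]
    · intro hx i
      rw [hctr, abs_lt]
      constructor <;> linarith [(hx i).1, (hx i).2]
  have floor_eq : ∀ (z : Fin n → ℤ) (y : EV n), y ∈ openCube (ctr z) r →
      ∀ i, z i = ⌊y i / r⌋ := by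
    intro z y hy i
    obtain ⟨h1, h2⟩ := (memCube z y).mp hy i
    symm
    rw [Int.floor_eq_iff]
    constructor
    · rw [le_div_iff₀ hr]; linarith
    · rw [div_lt_iff₀ hr]; push_cast; linarith
  have hdisj : ∀ z z' : Fin n → ℤ, z ≠ z' →
      Disjoint (openCube (ctr z) r) (openCube (ctr z') r) := by
    intro z z' hne
    rw [Set.disjoint_left]
    intro y hy hy'
    apply hne
    funext i
    rw [floor_eq z y hy i, floor_eq z' y hy' i]
  set T : Set (Fin n → ℤ) := {z | (K ∩ openCube (ctr z) r).Nonempty} with hTdef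
  obtain ⟨M, hM⟩ := isBounded_iff_forall_norm_le.mp hKc.isBounded
  have hTfin : T.Finite := by
    apply Set.Finite.subset (Set.Finite.pi
      (fun i : Fin n => Set.finite_Icc (-(⌈(M + r)/r⌉)) ⌈(M + r)/r⌉))
    rintro z ⟨x, hxK, hxc⟩
    intro i _
    obtain ⟨h1, h2⟩ := (memCube z x).mp hxc i
    have h3 : |x i| ≤ M := (abs_apply_le_norm x i).trans (hM x hxK)
    have h4 : |r * z i| ≤ M + r := by
      rw [abs_le] at h3 ⊢
      constructor <;> linarith [h3.1, h3.2]
    have h5 : |(z i : ℝ)| ≤ (M + r) / r := by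
      rw [abs_le] at h4 ⊢
      constructor
      · rw [← neg_div, div_le_iff₀ hr]; nlinarith [h4.1]
      · rw [le_div_iff₀ hr]; nlinarith [h4.2]
    rw [abs_le] at h5
    simp only [Set.mem_Icc]
    constructor
    · have := Int.le_ceil ((M + r)/r)
      exact_mod_cast (by push_cast; linarith [h5.1, this] : ((-(⌈(M + r)/r⌉) : ℤ) : ℝ) ≤ (z i : ℝ))
    · have := Int.le_ceil ((M + r)/r)
      exact_mod_cast (by push_cast; linarith [h5.2, this] : ((z i : ℝ)) ≤ ((⌈(M + r)/r⌉ : ℤ) : ℝ))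
  set S : Finset (Fin n → ℤ) := hTfin.toFinset with hSdef
  set c : Fin S.card → EV n := fun i => ctr ((S.equivFin.symm i : {x // x ∈ S}) : Fin n → ℤ) with hcdef
  have hmemT : ∀ i : Fin S.card, ((S.equivFin.symm i : {x // x ∈ S}) : Fin n → ℤ) ∈ T := by
    intro i
    exact hTfin.mem_toFinset.mp (S.equivFin.symm i).2
  have cube_sub_C : ∀ z ∈ T, openCube (ctr z) r ⊆ C := by
    rintro z ⟨k, hkK, hkc⟩ x hx
    have h1 : ‖x - k‖ ≤ Real.sqrt n * r := cube_dist (ctr z) x hx k hkc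
    exact mem_cthickening_of_dist_le x k δ K hkK
      (by rw [dist_eq_norm]; linarith [min_le_left δ η, hrn])
  have cube_sub_U : ∀ i, openCube (c i) r ⊆ U := fun i =>
    (cube_sub_C _ (hmemT i)).trans hCU
  -- key volume bound
  have hBnull : volume (⋃ i : Fin n, ⋃ z : ℤ, {x : EV n | x i = r * z}) = 0 :=
    measure_iUnion_null fun i => measure_iUnion_null fun z => hyperplane_null i (r * z)
  have hcover : K \ (⋃ i, openCube (c i) r) ⊆ ⋃ i : Fin n, ⋃ z : ℤ, {x : EV n | x i = r * z} := by
    rintro x ⟨hxK, hxn⟩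
    by_contra hxB
    simp only [mem_iUnion, mem_setOf_eq, not_exists] at hxB
    apply hxn
    set z : Fin n → ℤ := fun i => ⌊x i / r⌋ with hzdef
    have hmem : x ∈ openCube (ctr z) r := by
      rw [memCube]
      intro i
      have h1 : ((z i : ℝ)) ≤ x i / r := Int.floor_le _
      have h2 : x i / r < z i + 1 := Int.lt_floor_add_one _
      have h3 : r * z i ≤ x i := by
        rw [← le_div_iff₀' hr]; exact h1
      have h4 : x i < r * z i + r := by
        have := (div_lt_iff₀ hr).mp h2
        linarith [this]
      refine ⟨lt_of_le_of_ne h3 ?_, h4⟩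
      intro heq
      exact hxB i (z i) heq.symm
    have hzT : z ∈ T := ⟨x, hxK, hmem⟩
    refine mem_iUnion.mpr ⟨S.equivFin ⟨z, hTfin.mem_toFinset.mpr hzT⟩, ?_⟩
    have : c (S.equivFin ⟨z, hTfin.mem_toFinset.mpr hzT⟩) = ctr z := by
      rw [hcdef]; simp
    rw [this]
    exact hmem
  have hvolU : volume (U \ ⋃ i, openCube (c i) r) < ENNReal.ofReal σ := by
    have hsub : U \ (⋃ i, openCube (c i) r) ⊆ (U \ K) ∪ (K \ ⋃ i, openCube (c i) r) := by
      rintro x ⟨hxU, hxn⟩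
      by_cases hxK : x ∈ K
      · exact Or.inr ⟨hxK, hxn⟩
      · exact Or.inl ⟨hxU, hxK⟩
    calc volume (U \ ⋃ i, openCube (c i) r)
        ≤ volume ((U \ K) ∪ (K \ ⋃ i, openCube (c i) r)) := measure_mono hsub
      _ ≤ volume (U \ K) + volume (K \ ⋃ i, openCube (c i) r) := measure_union_le _ _
      _ = volume (U \ K) + 0 := by rw [measure_mono_null hcover hBnull]
      _ = volume (U \ K) := by rw [add_zero]
      _ < ENNReal.ofReal σ := hKlt
  refine ⟨r, S.card, c, hr, ?_, ?_, hvolU, ?_, ?_⟩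
  · exact cube_sub_U
  · intro i j hij
    apply hdisj
    intro h
    apply hij
    have : (S.equivFin.symm i) = (S.equivFin.symm j) := Subtype.ext h
    exact S.equivFin.symm.injective this
  · intro i x hx y hy
    have hxC : x ∈ C := cube_sub_C _ (hmemT i) hx
    have hyC : y ∈ C := cube_sub_C _ (hmemT i) hy
    have hdistxy : dist x y < η := by
      rw [dist_eq_norm]
      calc ‖x - y‖ ≤ Real.sqrt n * r := cube_dist _ x hx y hy
        _ < η := lt_of_lt_of_le hrn (min_le_right δ η)
    have := hηs x hxC y hyC hdistxy
    rw [dist_eq_norm] at this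
    rw [hfw x (hCΩ hxC), hfw y (hCΩ hyC)]
    exact this
  · intro hfr
    have hclos : closure U \ (⋃ i, openCube (c i) r)
        ⊆ (U \ ⋃ i, openCube (c i) r) ∪ frontier U := by
      rintro x ⟨hx, hxn⟩
      by_cases hxU : x ∈ U
      · exact Or.inl ⟨hxU, hxn⟩
      · right
        rw [hUopen.frontier_eq]
        exact ⟨hx, hxU⟩
    have hvol2 : volume (closure U \ ⋃ i, openCube (c i) r) < ENNReal.ofReal σ := by
      calc volume (closure U \ ⋃ i, openCube (c i) r)
          ≤ volume ((U \ ⋃ i, openCube (c i) r) ∪ frontier U) := measure_mono hclos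
        _ ≤ volume (U \ ⋃ i, openCube (c i) r) + volume (frontier U) := measure_union_le _ _
        _ = volume (U \ ⋃ i, openCube (c i) r) := by rw [hfr, add_zero]
        _ < ENNReal.ofReal σ := hvolU
    obtain ⟨W₀, hW₀s, hW₀o, hW₀v⟩ := exists_isOpen_lt_of_lt (μ := (volume : Measure (EV n))) (closure U \ ⋃ i, openCube (c i) r) (ENNReal.ofReal σ) hvol2
    refine ⟨W₀ ∩ Ω, hW₀o.inter hΩo, inter_subset_right, ?_, ?_⟩
    · rintro x ⟨hxΩ, hxS⟩
      exact ⟨hW₀s hxS, hxΩ⟩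
    · exact lt_of_le_of_lt (measure_mono inter_subset_left) hW₀v
end
end

section
/- Let α_p be a p-core functional with domain L^p_loc(ℝⁿ;ℝᵐ) × 𝓔^D_Γ(ℝⁿ). Then: (i) for every D' ∈ 𝓔^D_Γ(ℝⁿ), the map ℝ^{m×n} ∋ A ↦ α_p(l^A, D') is convex and locally Lipschitz continuous, where l^A(x) = Ax. (ii) If moreover Γ = Γ^𝒢 for a subgroup 𝒢 of SO(n), then there exists a constant C_Σ > 0 (depending on α_p) such that |α_p(l^A, D') − α_p(l^B, D')| ≤ ε^p C_Σ |A − B|₂ for all A, B in the closed unit ball Σ := {A ∈ ℝ^{m×n} : |A|₂ ≤ 1}, all ε > 0, and all D' ∈ 𝒢^D_ε(ℝⁿ). -/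
open MeasureTheory Filter Topology Set ENNReal Matrix

noncomputable section

section AuxStatement8

variable {n m : ℕ}

/-- The continuous linear map associated to a matrix. -/
def mclm (A : Mat m n) : EV n →L[ℝ] EV m :=
  LinearMap.toContinuousLinearMap (Matrix.toEuclideanLin A)

lemma matMap_eq_mclm (A : Mat m n) : matMap A = ⇑(mclm A) := rfl

lemma mnorm_eq (A : Mat m n) : mnorm A = ‖mclm A‖ := rfl

lemma matMap_le (A : Mat m n) (x : EV n) : ‖matMap A x‖ ≤ mnorm A * ‖x‖ := by
  rw [matMap_eq_mclm, mnorm_eq]; exact (mclm A).le_opNorm x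

lemma mnorm_nonneg' (A : Mat m n) : 0 ≤ mnorm A := norm_nonneg _

lemma mclm_add (A B : Mat m n) : mclm (A + B) = mclm A + mclm B := by
  refine ContinuousLinearMap.ext fun x => ?_
  show Matrix.toEuclideanLin (A + B) x = Matrix.toEuclideanLin A x + Matrix.toEuclideanLin B x
  rw [map_add]; rfl

lemma mclm_smul (c : ℝ) (A : Mat m n) : mclm (c • A) = c • mclm A := by
  refine ContinuousLinearMap.ext fun x => ?_
  show Matrix.toEuclideanLin (c • A) x = c • Matrix.toEuclideanLin A x
  rw [_root_.map_smul]; rfl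

lemma mnorm_add_le (A B : Mat m n) : mnorm (A + B) ≤ mnorm A + mnorm B := by
  rw [mnorm_eq, mnorm_eq, mnorm_eq, mclm_add]; exact norm_add_le _ _

lemma mnorm_smul (c : ℝ) (A : Mat m n) : mnorm (c • A) = |c| * mnorm A := by
  rw [mnorm_eq, mnorm_eq, mclm_smul, norm_smul c (mclm A), Real.norm_eq_abs]

lemma mnorm_neg (A : Mat m n) : mnorm (-A) = mnorm A := by
  have h : (-A) = (-1 : ℝ) • A := by simp
  rw [h, mnorm_smul]; simp

lemma mnorm_sub_comm (A B : Mat m n) : mnorm (A - B) = mnorm (B - A) := by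
  rw [← mnorm_neg (A - B), neg_sub]

lemma mnorm_eq_zero {A : Mat m n} (h : mnorm A = 0) : A = 0 := by
  have h1 : mclm A = 0 := by rwa [mnorm_eq, norm_eq_zero] at h
  have h2 : Matrix.toEuclideanLin A = 0 := by
    refine LinearMap.ext fun x => ?_
    have : mclm A x = 0 := by rw [h1]; rfl
    exact this
  exact (LinearEquiv.map_eq_zero_iff _).mp h2

lemma matMap_add_right (A : Mat m n) (x y : EV n) :
    matMap A (x + y) = matMap A x + matMap A y := map_add (Matrix.toEuclideanLin A) x y

lemma matMap_smul_right (A : Mat m n) (c : ℝ) (x : EV n) :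
    matMap A (c • x) = c • matMap A x := _root_.map_smul (Matrix.toEuclideanLin A) c x

lemma matMap_matrix_add (A B : Mat m n) (x : EV n) :
    matMap (A + B) x = matMap A x + matMap B x := by
  show Matrix.toEuclideanLin (A + B) x = _
  rw [map_add]; rfl

lemma matMap_matrix_smul (c : ℝ) (A : Mat m n) (x : EV n) :
    matMap (c • A) x = c • matMap A x := by
  show Matrix.toEuclideanLin (c • A) x = _
  rw [_root_.map_smul]; rfl

lemma matMap_apply (A : Mat m n) (x : EV n) (i : Fin m) :
    matMap A x i = ∑ k, A i k * x k := rfl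

lemma matMap_mul (A : Mat m n) (R : Mat n n) (x : EV n) :
    matMap (A * R) x = matMap A (matMap R x) := by
  simp [matMap, Matrix.toEuclideanLin_apply, Matrix.mulVec_mulVec]

lemma matMap_one (x : EV n) : matMap (1 : Mat n n) x = x := by
  simp [matMap, Matrix.toEuclideanLin_apply, Matrix.one_mulVec]

lemma norm_matMap_orth {R : Mat n n} (hR : Rᵀ * R = 1) (x : EV n) :
    ‖matMap R x‖ = ‖x‖ := by
  have key : ∑ i, matMap R x i * matMap R x i = ∑ i, x i * x i := by
    have h1 : ∀ i, matMap R x i = (R *ᵥ (fun k => x k)) i := fun i => rfl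
    calc ∑ i, matMap R x i * matMap R x i
        = (R *ᵥ (fun k => x k)) ⬝ᵥ (R *ᵥ (fun k => x k)) := by
          simp [dotProduct, h1]
      _ = (fun k => x k) ⬝ᵥ (fun k => x k) := by
          rw [Matrix.dotProduct_mulVec, ← Matrix.mulVec_transpose, Matrix.mulVec_mulVec, hR,
            Matrix.one_mulVec]
      _ = ∑ i, x i * x i := rfl
  rw [EuclideanSpace.norm_eq, EuclideanSpace.norm_eq]
  congr 1
  simpa [Real.norm_eq_abs, sq_abs, pow_two] using key

lemma mnorm_orth {R : Mat n n} (hR : Rᵀ * R = 1) : mnorm R ≤ 1 := by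
  rw [mnorm_eq]
  refine ContinuousLinearMap.opNorm_le_bound _ zero_le_one fun x => ?_
  rw [one_mul]
  show ‖matMap R x‖ ≤ ‖x‖
  exact le_of_eq (norm_matMap_orth hR x)

lemma mnorm_mul_le (A : Mat m n) (R : Mat n n) : mnorm (A * R) ≤ mnorm A * mnorm R := by
  rw [mnorm_eq (A * R)]
  refine ContinuousLinearMap.opNorm_le_bound _
    (mul_nonneg (mnorm_nonneg' A) (mnorm_nonneg' R)) fun x => ?_
  show ‖matMap (A * R) x‖ ≤ mnorm A * mnorm R * ‖x‖
  rw [matMap_mul]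
  calc ‖matMap A (matMap R x)‖ ≤ mnorm A * ‖matMap R x‖ := matMap_le _ _
    _ ≤ mnorm A * (mnorm R * ‖x‖) :=
        mul_le_mul_of_nonneg_left (matMap_le R x) (mnorm_nonneg' A)
    _ = mnorm A * mnorm R * ‖x‖ := by ring

end AuxStatement8
section AuxStatement8B

variable {n m : ℕ}

lemma affMap_id : affMap (1 : ℝ) (1 : Mat n n) (0 : EV n) = id := by
  funext x; simp [affMap, matMap_one]

lemma D_mem_cellsAll {G : Set (Mat n n)} (hG : IsSOSubgroup G) (D : Set (EV n)) :
    D ∈ cellsAll G D Set.univ := by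
  have h1 : D ∈ cellsIn G D 1 Set.univ := by
    refine ⟨⟨1, hG.one_mem, 0, ?_⟩, Set.subset_univ D⟩
    rw [affMap_id, Set.image_id]
  exact Set.mem_biUnion (Set.mem_Ioi.mpr one_pos) h1

lemma mem_cellsAll_of_cellsIn {G : Set (Mat n n)} {D Ω : Set (EV n)} {ε : ℝ} (hε : 0 < ε)
    {D' : Set (EV n)} (h : D' ∈ cellsIn G D ε Ω) : D' ∈ cellsAll G D Ω :=
  Set.mem_biUnion (Set.mem_Ioi.mpr hε) h

lemma memLp_matMap (A : Mat m n) (q : ℝ) {K : Set (EV n)} (hK : Bornology.IsBounded K) :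
    MemLp (matMap A) (ENNReal.ofReal q) (volume.restrict K) := by
  obtain ⟨r, hr⟩ := hK.subset_closedBall 0
  haveI : IsFiniteMeasure (volume.restrict K) :=
    ⟨by rw [Measure.restrict_apply_univ]; exact hK.measure_lt_top⟩
  have hcont : Continuous (matMap A) := by
    rw [matMap_eq_mclm]; exact (mclm A).continuous
  refine MemLp.of_bound hcont.aestronglyMeasurable (mnorm A * |r|) ?_
  have hsub : K ⊆ Metric.closedBall 0 |r| :=
    hr.trans (Metric.closedBall_subset_closedBall (le_abs_self r))
  refine Filter.Eventually.filter_mono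
    (ae_mono (Measure.restrict_mono hsub le_rfl)) ?_
  filter_upwards [ae_restrict_mem measurableSet_closedBall] with x hx
  have hxr : ‖x‖ ≤ |r| := by simpa [Metric.mem_closedBall, dist_zero_right] using hx
  calc ‖matMap A x‖ ≤ mnorm A * ‖x‖ := matMap_le A x
    _ ≤ mnorm A * |r| := mul_le_mul_of_nonneg_left hxr (mnorm_nonneg' A)

lemma memLpLocAll_matMap (A : Mat m n) (q : ℝ) : MemLpLocAll (matMap A) q :=
  fun _K hK => memLp_matMap A q hK.isBounded

lemma alpha_fin {p : ℝ} {G : Set (Mat n n)} {D : Set (EV n)}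
    {α : (EV n → EV m) → Set (EV n) → ℝ≥0∞} (hα : IsPCore p G D α)
    {D' : Set (EV n)} (hD' : D' ∈ cellsAll G D Set.univ) (A : Mat m n) :
    α (matMap A) D' ≠ ⊤ :=
  (hα.lt_top _ _ (memLpLocAll_matMap A p) hD').ne

end AuxStatement8B
section AuxStatement8C

variable {n m : ℕ}

lemma weakGrad_const (D : Set (EV n)) (C : Mat m n) :
    IsWeakGradOn (matMap C) (fun _ => C) D := by
  intro φ hφ i j
  show ∫ x in D, C i j * φ x = - ∫ x in D, ((LinearMap.id : Mat m n →ₗ[ℝ] Mat m n) (tensorGrad (matMap C) φ x)) i j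
  obtain ⟨Lφ, hLφ⟩ := ContDiff.lipschitzWith_of_hasCompactSupport hφ.2.1 hφ.1 (by simp)
  have hφdiff : Differentiable ℝ φ := hφ.1.differentiable (by simp)
  set L : EV n →L[ℝ] ℝ := (EuclideanSpace.proj i).comp (mclm C) with hLdef
  have hLx : ∀ x, L x = matMap C x i := fun x => rfl
  have hzero1 : ∀ x ∉ D, C i j * φ x = 0 := by
    intro x hx
    have hφx : φ x = 0 := image_eq_zero_of_notMem_tsupport (fun h => hx (hφ.2.2 h))
    simp [hφx]
  have hgrad0 : ∀ x ∉ D, fderiv ℝ φ x = 0 := by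
    intro x hx
    by_contra h
    exact hx (hφ.2.2 (support_fderiv_subset ℝ (Function.mem_support.mpr h)))
  have hzero2 : ∀ x ∉ D, ((LinearMap.id : Mat m n →ₗ[ℝ] Mat m n) (tensorGrad (matMap C) φ x)) i j = 0 := by
    intro x hx
    simp [tensorGrad, hgrad0 x hx]
  rw [setIntegral_eq_integral_of_forall_compl_eq_zero hzero1,
    setIntegral_eq_integral_of_forall_compl_eq_zero hzero2]
  have key := LipschitzWith.integral_lineDeriv_mul_eq (μ := volume) L.lipschitz hLφ hφ.2.1
    (EuclideanSpace.single j 1)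
  have h1 : ∀ x : EV n, lineDeriv ℝ (⇑L) x (EuclideanSpace.single j 1) = C i j := by
    intro x
    rw [(L.differentiableAt).lineDeriv_eq_fderiv, L.fderiv, hLx, matMap_apply]
    have hv : ∀ k, (EuclideanSpace.single j (1:ℝ)) k = if k = j then 1 else 0 := fun k =>
      EuclideanSpace.single_apply j 1 k
    simp [hv, mul_ite]
  have h2 : ∀ x : EV n, lineDeriv ℝ φ x (-(EuclideanSpace.single j 1)) =
      - fderiv ℝ φ x (EuclideanSpace.single j 1) := by
    intro x
    rw [(hφdiff x).lineDeriv_eq_fderiv, map_neg]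
  have e1 : ∫ x, C i j * φ x =
      ∫ x, lineDeriv ℝ (⇑L) x (EuclideanSpace.single j 1) * φ x := by
    refine integral_congr_ae (Filter.Eventually.of_forall fun x => ?_)
    beta_reduce
    rw [h1]
  have e2 : ∫ x, lineDeriv ℝ φ x (-(EuclideanSpace.single j 1)) * L x =
      - ∫ x, matMap C x i * fderiv ℝ φ x (EuclideanSpace.single j 1) := by
    rw [← integral_neg]
    refine integral_congr_ae (Filter.Eventually.of_forall fun x => ?_)
    beta_reduce
    rw [h2, hLx]; ring
  have egoal : (fun x => ((LinearMap.id : Mat m n →ₗ[ℝ] Mat m n) (tensorGrad (matMap C) φ x)) i j) =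
      fun x => matMap C x i * fderiv ℝ φ x (EuclideanSpace.single j 1) := by
    funext x; simp [tensorGrad]
  rw [egoal, e1, key]
  exact e2

end AuxStatement8C
section AuxStatement8D

variable {n m : ℕ}

lemma alpha_scale {p : ℝ} {G : Set (Mat n n)} {D : Set (EV n)}
    {α : (EV n → EV m) → Set (EV n) → ℝ≥0∞} (hα : IsPCore p G D α) (hG : IsSOSubgroup G)
    (A : Mat m n) {ε : ℝ} (hε : 0 < ε) {R : Mat n n} (hR : R ∈ G) (h : EV n) :
    α (matMap A) (affMap ε R h '' D) = ENNReal.ofReal (ε ^ p) * α (matMap (A * R)) D := by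
  have hD := D_mem_cellsAll hG D
  have h1 := hα.chvar (matMap A) D hD ε hε R hR h
  have e : (fun x => matMap A (affMap ε R h x)) =
      (fun x => ε • matMap (A * R) x + matMap A h) := by
    funext x
    show matMap A (ε • matMap R x + h) = _
    rw [matMap_add_right, matMap_smul_right, ← matMap_mul]
  rw [← h1, e, hα.transl _ D hD (matMap A h), hα.homog _ D hD ε, abs_of_pos hε]

lemma alpha_base_le {p : ℝ} {G : Set (Mat n n)} {D : Set (EV n)}
    {α : (EV n → EV m) → Set (EV n) → ℝ≥0∞} (hα : IsPCore p G D α)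
    (hDb : Bornology.IsBounded D) :
    ∃ c₁ : ℝ, 0 < c₁ ∧ ∀ C : Mat m n,
      (α (matMap C) D).toReal ≤ c₁ * (volume D).toReal * mnorm C ^ p := by
  obtain ⟨c₁, hc₁, hbound⟩ := hα.gradBound
  refine ⟨c₁, hc₁, fun C => ?_⟩
  have hlint : (∫⁻ _ in D, ENNReal.ofReal (mnorm C ^ p) : ℝ≥0∞) =
      ENNReal.ofReal (mnorm C ^ p) * volume D := setLIntegral_const D _
  have hMemMat : MemLpMatOn (fun _ : EV n => C) p D := by
    refine ⟨fun i j => aemeasurable_const, ?_⟩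
    show (∫⁻ _ in D, ENNReal.ofReal (mnorm C ^ p) : ℝ≥0∞) < ⊤
    rw [hlint]
    exact ENNReal.mul_lt_top ENNReal.ofReal_lt_top hDb.measure_lt_top
  have h1 : α (matMap C) D ≤
      ENNReal.ofReal c₁ * (ENNReal.ofReal (mnorm C ^ p) * volume D) := by
    have := hbound (matMap C) (fun _ => C) (memLp_matMap C p hDb) (weakGrad_const D C) hMemMat
    calc α (matMap C) D ≤ ENNReal.ofReal c₁ * ∫⁻ _ in D, ENNReal.ofReal (mnorm C ^ p) := this
      _ = _ := by rw [hlint]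
  have hne : ENNReal.ofReal c₁ * (ENNReal.ofReal (mnorm C ^ p) * volume D) ≠ ⊤ :=
    ENNReal.mul_ne_top ENNReal.ofReal_ne_top
      (ENNReal.mul_ne_top ENNReal.ofReal_ne_top hDb.measure_lt_top.ne)
  calc (α (matMap C) D).toReal
      ≤ (ENNReal.ofReal c₁ * (ENNReal.ofReal (mnorm C ^ p) * volume D)).toReal :=
        ENNReal.toReal_mono hne h1
    _ = c₁ * (mnorm C ^ p * (volume D).toReal) := by
        rw [ENNReal.toReal_mul, ENNReal.toReal_mul, ENNReal.toReal_ofReal hc₁.le,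
          ENNReal.toReal_ofReal (Real.rpow_nonneg (mnorm_nonneg' C) p)]
    _ = c₁ * (volume D).toReal * mnorm C ^ p := by ring

lemma alpha_cell_le {p : ℝ} {G : Set (Mat n n)} {D : Set (EV n)}
    {α : (EV n → EV m) → Set (EV n) → ℝ≥0∞} (hα : IsPCore p G D α) (hG : IsSOSubgroup G)
    (hp0 : 0 ≤ p) {c₁ : ℝ} (hc₁ : 0 ≤ c₁)
    (hbase : ∀ C : Mat m n, (α (matMap C) D).toReal ≤ c₁ * (volume D).toReal * mnorm C ^ p)
    {ε : ℝ} (hε : 0 < ε) {D' : Set (EV n)} (hD' : D' ∈ cellsIn G D ε Set.univ)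
    {ρ : ℝ} (hρ : 0 ≤ ρ) (A : Mat m n) (hA : mnorm A ≤ ρ) :
    (α (matMap A) D').toReal ≤ ε ^ p * (c₁ * (volume D).toReal * ρ ^ p) := by
  obtain ⟨⟨R, hR, h, rfl⟩, -⟩ := hD'
  rw [alpha_scale hα hG A hε hR h, ENNReal.toReal_mul,
    ENNReal.toReal_ofReal (Real.rpow_nonneg hε.le p)]
  have hAR : mnorm (A * R) ≤ ρ := by
    calc mnorm (A * R) ≤ mnorm A * mnorm R := mnorm_mul_le A R
      _ ≤ mnorm A * 1 := mul_le_mul_of_nonneg_left (mnorm_orth (hG.orth R hR)) (mnorm_nonneg' A)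
      _ = mnorm A := mul_one _
      _ ≤ ρ := hA
  have h2 : mnorm (A * R) ^ p ≤ ρ ^ p := Real.rpow_le_rpow (mnorm_nonneg' _) hAR hp0
  have h3 : (α (matMap (A * R)) D).toReal ≤ c₁ * (volume D).toReal * ρ ^ p :=
    (hbase (A * R)).trans
      (mul_le_mul_of_nonneg_left h2 (mul_nonneg hc₁ ENNReal.toReal_nonneg))
  exact mul_le_mul_of_nonneg_left h3 (Real.rpow_nonneg hε.le p)

lemma convexOn_alpha {p : ℝ} {G : Set (Mat n n)} {D : Set (EV n)}
    {α : (EV n → EV m) → Set (EV n) → ℝ≥0∞} (hα : IsPCore p G D α)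
    {D' : Set (EV n)} (hD' : D' ∈ cellsAll G D Set.univ) :
    ConvexOn ℝ Set.univ (fun A : Mat m n => (α (matMap A) D').toReal) := by
  refine ⟨convex_univ, fun A _ B _ a b ha hb hab => ?_⟩
  have hfin : ∀ X : Mat m n, α (matMap X) D' ≠ ⊤ := fun X => alpha_fin hα hD' X
  have hb' : b = 1 - a := by linarith
  have key := hα.convexity (matMap A) (matMap B) D' hD' a ha (by linarith)
  have e : (fun x => a • matMap A x + (1 - a) • matMap B x) = matMap (a • A + b • B) := by
    funext x
    rw [matMap_matrix_add, matMap_matrix_smul, matMap_matrix_smul, hb']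
  rw [e] at key
  have h1 : ENNReal.ofReal a * α (matMap A) D' ≠ ⊤ :=
    ENNReal.mul_ne_top ENNReal.ofReal_ne_top (hfin A)
  have h2 : ENNReal.ofReal (1 - a) * α (matMap B) D' ≠ ⊤ :=
    ENNReal.mul_ne_top ENNReal.ofReal_ne_top (hfin B)
  show (α (matMap (a • A + b • B)) D').toReal ≤
    a * (α (matMap A) D').toReal + b * (α (matMap B) D').toReal
  calc (α (matMap (a • A + b • B)) D').toReal
      ≤ (ENNReal.ofReal a * α (matMap A) D' +
          ENNReal.ofReal (1 - a) * α (matMap B) D').toReal :=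
        ENNReal.toReal_mono (ENNReal.add_ne_top.mpr ⟨h1, h2⟩) key
    _ = a * (α (matMap A) D').toReal + b * (α (matMap B) D').toReal := by
        rw [ENNReal.toReal_add h1 h2, ENNReal.toReal_mul, ENNReal.toReal_mul,
          ENNReal.toReal_ofReal ha, ENNReal.toReal_ofReal (by linarith : (0:ℝ) ≤ 1 - a), hb']

lemma lip_of_convex {f : Mat m n → ℝ} (hf : ConvexOn ℝ Set.univ f) (hf0 : ∀ A, 0 ≤ f A)
    {ρ M : ℝ} (hρ : 0 ≤ ρ) (hM : 0 ≤ M)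
    (hb : ∀ C : Mat m n, mnorm C ≤ 3 * ρ + 1 → f C ≤ M)
    {A B : Mat m n} (hA : mnorm A ≤ ρ) (hB : mnorm B ≤ ρ) :
    |f A - f B| ≤ M * mnorm (A - B) := by
  have key : ∀ X Y : Mat m n, mnorm X ≤ ρ → mnorm Y ≤ ρ →
      f X - f Y ≤ M * mnorm (X - Y) := by
    intro X Y hX hY
    by_cases hXY : X = Y
    · subst hXY
      simpa using mul_nonneg hM (mnorm_nonneg' (X - X))
    · set d := mnorm (X - Y) with hd
      have hd0 : 0 < d := by
        rcases lt_or_eq_of_le (mnorm_nonneg' (X - Y)) with h | h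
        · exact h
        · exact absurd (sub_eq_zero.mp (mnorm_eq_zero h.symm)) hXY
      have hd2 : d ≤ 2 * ρ := by
        have h1 : mnorm (X - Y) ≤ mnorm X + mnorm (-Y) := by
          rw [sub_eq_add_neg]; exact mnorm_add_le X (-Y)
        rw [mnorm_neg] at h1
        linarith
      have hd1 : (0:ℝ) < d + 1 := by linarith
      set l := d / (d + 1) with hl
      have hl0 : 0 ≤ l := div_nonneg hd0.le hd1.le
      have hl1 : l ≤ 1 := by rw [hl, div_le_one hd1]; linarith
      have hlmul : l * (1 + 1/d) = 1 := by
        rw [hl]; field_simp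
      set Cm := Y + (1 + 1/d) • (X - Y) with hCm
      have hCnorm : mnorm Cm ≤ 3 * ρ + 1 := by
        have h1 : mnorm ((1 + 1/d) • (X - Y)) = (1 + 1/d) * d := by
          rw [mnorm_smul, abs_of_pos (by positivity : (0:ℝ) < 1 + 1/d)]
        have h2 : (1 + 1/d) * d = d + 1 := by field_simp
        have h3 : mnorm Cm ≤ mnorm Y + mnorm ((1 + 1/d) • (X - Y)) := mnorm_add_le _ _
        rw [h1, h2] at h3
        linarith
      have hcomb : (1 - l) • Y + l • Cm = X := by
        rw [hCm]
        simp only [smul_add, smul_smul, hlmul, sub_smul, one_smul]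
        abel
      have hconv := hf.2 (Set.mem_univ Y) (Set.mem_univ Cm)
        (by linarith : (0:ℝ) ≤ 1 - l) hl0 (by ring)
      rw [hcomb] at hconv
      simp only [smul_eq_mul] at hconv
      have hfC := hb Cm hCnorm
      have hlled : l ≤ d := by
        rw [hl, div_le_iff₀ hd1]; nlinarith
      nlinarith [hf0 Y, mul_le_mul_of_nonneg_left hfC hl0,
        mul_le_mul_of_nonneg_right hlled hM, mul_nonneg hl0 (hf0 Y)]
  have h1 := key A B hA hB
  have h2 := key B A hB hA
  rw [mnorm_sub_comm B A] at h2
  exact abs_sub_le_iff.mpr ⟨h1, h2⟩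

end AuxStatement8D

/-- **Proposition (regularity of `A ↦ α_p(l^A, D')`).**
Let `α_p` be a `p`-core functional.  Then for every `D'` in the class `𝓔^D_Γ(ℝⁿ)`
(here `Γ = Γ^𝒢`), the map `A ↦ α_p(l^A, D')` is convex and locally Lipschitz on `ℝ^{m×n}`.
Moreover there exists `C_Σ > 0` such that
`|α_p(l^A, D') − α_p(l^B, D')| ≤ ε^p C_Σ |A − B|₂` for all `A, B` in the unit ball
`Σ = {A : |A|₂ ≤ 1}`, all `ε > 0` and all `D' ∈ 𝒢^D_ε(ℝⁿ)`. -/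
theorem statement8 {n m : ℕ} (hn : 1 ≤ n) (hm : 1 ≤ m) {p : ℝ} (hp : 1 ≤ p)
    (G : Set (Mat n n)) (hG : IsSOSubgroup G)
    (D : Set (EV n)) (hDo : IsOpen D) (hDb : Bornology.IsBounded D)
    (α : (EV n → EV m) → Set (EV n) → ℝ≥0∞) (hα : IsPCore p G D α) :
    (∀ D' ∈ cellsAll G D Set.univ,
      ConvexOn ℝ Set.univ (fun A : Mat m n => (α (matMap A) D').toReal) ∧
      (∀ A₀ : Mat m n, ∃ δ K : ℝ, 0 < δ ∧ 0 < K ∧ ∀ A B : Mat m n,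
        mnorm (A - A₀) < δ → mnorm (B - A₀) < δ →
        |(α (matMap A) D').toReal - (α (matMap B) D').toReal| ≤ K * mnorm (A - B))) ∧
    (∃ C : ℝ, 0 < C ∧ ∀ A B : Mat m n, mnorm A ≤ 1 → mnorm B ≤ 1 →
      ∀ ε : ℝ, 0 < ε → ∀ D' ∈ cellsIn G D ε Set.univ,
        |(α (matMap A) D').toReal - (α (matMap B) D').toReal| ≤
          ε ^ p * C * mnorm (A - B)) := by
  have hp0 : (0:ℝ) ≤ p := by linarith
  obtain ⟨c₁, hc₁, hbase⟩ := alpha_base_le (m := m) hα hDb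
  have hvol0 : 0 ≤ (volume D).toReal := ENNReal.toReal_nonneg
  constructor
  · -- part (i)
    intro D' hD'
    have hconv := convexOn_alpha hα hD'
    refine ⟨hconv, fun A₀ => ?_⟩
    obtain ⟨ε, hε, hD'ε⟩ : ∃ ε : ℝ, 0 < ε ∧ D' ∈ cellsIn G D ε Set.univ := by
      have := hD'
      simp only [cellsAll, Set.mem_iUnion, Set.mem_Ioi] at this
      obtain ⟨ε, hε, h⟩ := this
      exact ⟨ε, hε, h⟩
    set ρ := mnorm A₀ + 1 with hρdef
    have hρ0 : 0 ≤ ρ := by have := mnorm_nonneg' A₀; linarith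
    set M := ε ^ p * (c₁ * (volume D).toReal * (3 * ρ + 1) ^ p) with hMdef
    have hM0 : 0 ≤ M := by
      have h1 : (0:ℝ) ≤ ε ^ p := Real.rpow_nonneg hε.le p
      have h2 : (0:ℝ) ≤ (3 * ρ + 1) ^ p := Real.rpow_nonneg (by linarith) p
      have := mul_nonneg (mul_nonneg hc₁.le hvol0) h2
      exact mul_nonneg h1 this
    refine ⟨1, M + 1, one_pos, by linarith, fun A B hA hB => ?_⟩
    have hA' : mnorm A ≤ ρ := by
      have h := mnorm_add_le (A - A₀) A₀
      have e : A - A₀ + A₀ = A := by abel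
      rw [e] at h
      linarith
    have hB' : mnorm B ≤ ρ := by
      have h := mnorm_add_le (B - A₀) A₀
      have e : B - A₀ + A₀ = B := by abel
      rw [e] at h
      linarith
    have key := lip_of_convex hconv (fun X => ENNReal.toReal_nonneg) hρ0 hM0
      (fun C hC => alpha_cell_le hα hG hp0 hc₁.le hbase hε hD'ε
        (by linarith : (0:ℝ) ≤ 3 * ρ + 1) C hC) hA' hB'
    calc |(α (matMap A) D').toReal - (α (matMap B) D').toReal| ≤ M * mnorm (A - B) := key
      _ ≤ (M + 1) * mnorm (A - B) :=
          mul_le_mul_of_nonneg_right (by linarith) (mnorm_nonneg' _)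
  · -- part (ii)
    refine ⟨c₁ * (volume D).toReal * 4 ^ p + 1, ?_, fun A B hA hB ε hε D' hD' => ?_⟩
    · have h2 : (0:ℝ) ≤ 4 ^ p := Real.rpow_nonneg (by norm_num) p
      have := mul_nonneg (mul_nonneg hc₁.le hvol0) h2
      linarith
    · have hD'all := mem_cellsAll_of_cellsIn hε hD'
      have hconv := convexOn_alpha hα hD'all
      have hεp : (0:ℝ) ≤ ε ^ p := Real.rpow_nonneg hε.le p
      have h4 : (0:ℝ) ≤ c₁ * (volume D).toReal * 4 ^ p :=
        mul_nonneg (mul_nonneg hc₁.le hvol0) (Real.rpow_nonneg (by norm_num) p)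
      have hM0 : 0 ≤ ε ^ p * (c₁ * (volume D).toReal * 4 ^ p) := mul_nonneg hεp h4
      have key := lip_of_convex hconv (fun X => ENNReal.toReal_nonneg) zero_le_one hM0
        (fun C hC => alpha_cell_le hα hG hp0 hc₁.le hbase hε hD'
          (by norm_num : (0:ℝ) ≤ 4) C (by linarith)) hA hB
      calc |(α (matMap A) D').toReal - (α (matMap B) D').toReal|
          ≤ ε ^ p * (c₁ * (volume D).toReal * 4 ^ p) * mnorm (A - B) := key
        _ ≤ ε ^ p * (c₁ * (volume D).toReal * 4 ^ p + 1) * mnorm (A - B) := by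
            have := mnorm_nonneg' (A - B)
            nlinarith [mul_nonneg hεp (mnorm_nonneg' (A - B))]
end
end
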